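/- Let f be analytic on the disc with a zero of multiplicity m at a point z₀ ∈ 𝔻, and suppose the Liouville operator A_f is densely defined on H². Then the m functions g_{z₀}^{[0]}, ..., g_{z₀}^{[m−1]} are linearly independent eigenfunctions of A_f* with eigenvalue 0; hence the zero eigenspace of A_f* has dimension at least m. -/

import Mathlib

open Metric ComplexConjugate

noncomputable abbrev H2 : Type := lp (fun _ : ℕ => ℂ) 2

noncomputable def hardyEval (h : H2) (z : ℂ) : ℂ := ∑' n : ℕ, h n * z ^ n

/-- Taylor coefficients of the derivative-evaluation kernel `g_w^{[j]}`. -/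
noncomputable def gcoef (w : ℂ) (j : ℕ) : ℕ → ℂ := fun n =>
  if j ≤ n then ((n.factorial / (n - j).factorial : ℕ) : ℂ) * (conj w) ^ (n - j) else 0

/-! Pairing `h ∈ H²` with `g_w^{[j]}` gives the termwise `j`-th derivative of the Taylor series
of `h` at `w`, i.e. `h^{(j)}(w)`. So `⟨A_f g, g_{z₀}^{[j]}⟩ = (f g')^{(j)}(z₀)`, which by the
Leibniz rule is a combination of the `f^{(ℓ)}(z₀)` with `ℓ ≤ j < m`, all zero. The kernels are
linearly independent because their coefficient sequences are triangular: `gcoef w j` vanishes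
below `j` and equals `j!` at `j`. -/

open Filter Topology

theorem linearIndependent_of_apply_eq_zero_of_lt {R : Type*} [CommRing R] [IsDomain R] {m : ℕ}
    {v : Fin m → ℕ → R} (hlt : ∀ (i : Fin m) n, n < (i : ℕ) → v i n = 0)
    (hdiag : ∀ i, v i i ≠ 0) : LinearIndependent R v := by
  let M : Matrix (Fin m) (Fin m) R := Matrix.of fun i k => v i k
  have hM : M.IsUpperTriangular := fun i k => hlt i k
  have hdet : M.det ≠ 0 := by
    rw [Matrix.det_of_isUpperTriangular hM]
    exact Finset.prod_ne_zero_iff.mpr fun i _ => hdiag i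
  exact LinearIndependent.of_comp (LinearMap.funLeft R R Fin.val)
    (Matrix.linearIndependent_rows_of_det_ne_zero hdet)

theorem iteratedDeriv_mul_eq_zero_of_forall_iteratedDeriv_eq_zero {𝕜 𝔸 : Type*}
    [NontriviallyNormedField 𝕜] [NormedRing 𝔸] [NormedAlgebra 𝕜 𝔸] {f g : 𝕜 → 𝔸} {x : 𝕜}
    {j : ℕ} (hf : ContDiffAt 𝕜 j f x) (hg : ContDiffAt 𝕜 j g x)
    (hzero : ∀ ℓ ≤ j, iteratedDeriv ℓ f x = 0) : iteratedDeriv j (f * g) x = 0 := by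
  rw [iteratedDeriv_mul hf hg]
  refine Finset.sum_eq_zero fun ℓ hℓ => ?_
  rw [hzero ℓ (Nat.lt_succ_iff.mp (Finset.mem_range.mp hℓ)), mul_zero, zero_mul]

theorem summable_descFactorial_mul_geometric (k : ℕ) {r : ℝ} (hr₀ : 0 ≤ r) (hr : r < 1) :
    Summable fun n : ℕ => (n.descFactorial k : ℝ) * r ^ (n - k) := by
  refine (summable_nat_add_iff k).mp ?_
  have := (summable_choose_mul_geometric_of_norm_lt_one k
    (by rwa [Real.norm_of_nonneg hr₀] : ‖r‖ < 1)).mul_left (k.factorial : ℝ)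
  simpa [Nat.descFactorial_eq_factorial_mul_choose, mul_assoc] using this

theorem iteratedDerivWithin_const_mul_pow {𝕜 : Type*} [NontriviallyNormedField 𝕜] {s : Set 𝕜}
    (hs : IsOpen s) {z : 𝕜} (hz : z ∈ s) (a : 𝕜) (n k : ℕ) :
    iteratedDerivWithin k (fun w => a * w ^ n) s z = a * (n.descFactorial k * z ^ (n - k)) := by
  rw [iteratedDerivWithin_of_isOpen hs hz, iteratedDeriv_const_mul_field, iteratedDeriv_pow]

section PowerSeries

variable {c : ℕ → ℂ} {C : ℝ}

theorem summableLocallyUniformlyOn_iteratedDerivWithin_mul_pow (hc : ∀ n, ‖c n‖ ≤ C) (k : ℕ) :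
    SummableLocallyUniformlyOn
      (fun n => iteratedDerivWithin k (fun w => c n * w ^ n) (ball 0 1)) (ball (0 : ℂ) 1) := by
  refine SummableLocallyUniformlyOn_of_locally_bounded isOpen_ball fun K hK hKc => ?_
  obtain ⟨r, hr, hKr⟩ := exists_lt_subset_ball hKc.isClosed hK
  refine ⟨fun n => C * (n.descFactorial k * max r 0 ^ (n - k)),
    (summable_descFactorial_mul_geometric k (le_max_right _ _) (max_lt hr one_pos)).mul_left C,
    fun n z hz => ?_⟩
  have hzr : ‖z‖ ≤ max r 0 := (mem_ball_zero_iff.mp (hKr hz)).le.trans (le_max_left _ _)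
  rw [iteratedDerivWithin_const_mul_pow isOpen_ball (hK hz), norm_mul, norm_mul, norm_pow,
    Complex.norm_natCast]
  exact mul_le_mul (hc n) (by gcongr) (by positivity) ((norm_nonneg _).trans (hc 0))

theorem iteratedDeriv_tsum_mul_pow (hc : ∀ n, ‖c n‖ ≤ C) (k : ℕ) {z : ℂ}
    (hz : z ∈ ball (0 : ℂ) 1) :
    iteratedDeriv k (fun w => ∑' n, c n * w ^ n) z =
      ∑' n, c n * (n.descFactorial k * z ^ (n - k)) := by
  rw [← iteratedDerivWithin_of_isOpen isOpen_ball hz, iteratedDerivWithin_tsum k isOpen_ball hz]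
  · exact tsum_congr fun n => iteratedDerivWithin_const_mul_pow isOpen_ball hz _ _ _
  · intro t ht
    simpa using (summableLocallyUniformlyOn_iteratedDerivWithin_mul_pow hc 0).summable ht
  · exact fun j _ _ => summableLocallyUniformlyOn_iteratedDerivWithin_mul_pow hc j
  · intro n j r _ hr
    have hsmooth : ContDiff ℂ ⊤ fun w : ℂ => c n * w ^ n := by fun_prop
    exact (hsmooth.contDiffOn.differentiableOn_iteratedDerivWithin (by simp)
      isOpen_ball.uniqueDiffOn).differentiableAt (isOpen_ball.mem_nhds hr)

theorem analyticOnNhd_tsum_mul_pow (hc : ∀ n, ‖c n‖ ≤ C) :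
    AnalyticOnNhd ℂ (fun w => ∑' n, c n * w ^ n) (ball (0 : ℂ) 1) := by
  refine DifferentiableOn.analyticOnNhd ?_ isOpen_ball
  have := summableLocallyUniformlyOn_iteratedDerivWithin_mul_pow hc 0
  simp only [iteratedDerivWithin_zero] at this
  exact this.differentiableOn isOpen_ball fun n r _ => by fun_prop

end PowerSeries

theorem conj_gcoef (w : ℂ) (j n : ℕ) : conj (gcoef w j n) = n.descFactorial j * w ^ (n - j) := by
  unfold gcoef
  split_ifs with h
  · rw [map_mul, map_pow, Complex.conj_conj, map_natCast, Nat.descFactorial_eq_div h]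
  · rw [map_zero, Nat.descFactorial_eq_zero_iff_lt.mpr (not_le.mp h), Nat.cast_zero, zero_mul]

theorem tsum_mul_conj_gcoef (h : H2) (j : ℕ) {w : ℂ} (hw : w ∈ ball (0 : ℂ) 1) :
    ∑' n, h n * conj (gcoef w j n) = iteratedDeriv j (hardyEval h) w := by
  simp_rw [conj_gcoef]
  exact (iteratedDeriv_tsum_mul_pow (lp.norm_apply_le_norm two_ne_zero h) j hw).symm

theorem analyticOnNhd_hardyEval (h : H2) : AnalyticOnNhd ℂ (hardyEval h) (ball 0 1) :=
  analyticOnNhd_tsum_mul_pow (lp.norm_apply_le_norm two_ne_zero h)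

theorem linearIndependent_gcoef (w : ℂ) (m : ℕ) :
    LinearIndependent ℂ (fun j : Fin m => gcoef w j) :=
  linearIndependent_of_apply_eq_zero_of_lt (fun _ n hn => by simp [gcoef, not_le.mpr hn])
    (fun _ => by simp [gcoef, Nat.factorial_ne_zero])

theorem zero_eigenspace_dimension_general (f : ℂ → ℂ)
    (hf : AnalyticOnNhd ℂ f (ball (0 : ℂ) 1))
    (z₀ : ℂ) (hz₀ : z₀ ∈ ball (0 : ℂ) 1) (m : ℕ)
    (hzero : ∀ ℓ < m, iteratedDeriv ℓ f z₀ = 0) :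
    LinearIndependent ℂ (fun j : Fin m => gcoef z₀ (j : ℕ)) ∧
    ∀ j : Fin m, ∀ g u : H2,
      (∀ z ∈ ball (0 : ℂ) 1, hardyEval u z = f z * deriv (hardyEval g) z) →
      ∑' n : ℕ, u n * conj (gcoef z₀ (j : ℕ) n) = 0 := by
  refine ⟨linearIndependent_gcoef z₀ m, fun j g u hgu => ?_⟩
  have hu : hardyEval u =ᶠ[𝓝 z₀] f * deriv (hardyEval g) :=
    eventually_of_mem (isOpen_ball.mem_nhds hz₀) hgu
  rw [tsum_mul_conj_gcoef u j hz₀, hu.iteratedDeriv_eq]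
  exact iteratedDeriv_mul_eq_zero_of_forall_iteratedDeriv_eq_zero (hf z₀ hz₀).contDiffAt
    ((analyticOnNhd_hardyEval g).deriv z₀ hz₀).contDiffAt
    fun ℓ hℓ => hzero ℓ (hℓ.trans_lt j.2)

/-- If `f` is analytic with a zero of multiplicity `m` at `z₀ ∈ 𝔻` and `A_f` is
densely defined, then `g_{z₀}^{[0]}, …, g_{z₀}^{[m−1]}` are linearly independent
eigenfunctions of `A_f*` with eigenvalue `0`; hence the zero eigenspace of `A_f*`
has dimension at least `m`. -/
theorem zero_eigenspace_dimension (f : ℂ → ℂ)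
    (hf : AnalyticOnNhd ℂ f (ball (0 : ℂ) 1))
    (z₀ : ℂ) (hz₀ : z₀ ∈ ball (0 : ℂ) 1) (m : ℕ) (hm : 1 ≤ m)
    (hzero : ∀ ℓ < m, iteratedDeriv ℓ f z₀ = 0)
    (hmult : iteratedDeriv m f z₀ ≠ 0)
    (hdense : Dense {g : H2 | ∃ u : H2, ∀ z ∈ ball (0 : ℂ) 1,
      hardyEval u z = f z * deriv (hardyEval g) z}) :
    LinearIndependent ℂ (fun j : Fin m => gcoef z₀ (j : ℕ)) ∧
    ∀ j : Fin m, ∀ g u : H2,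
      (∀ z ∈ ball (0 : ℂ) 1, hardyEval u z = f z * deriv (hardyEval g) z) →
      ∑' n : ℕ, u n * conj (gcoef z₀ (j : ℕ) n) = 0 :=
  zero_eigenspace_dimension_general f hf z₀ hz₀ m hzero
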